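/- The fireball reduction →f of the fireball calculus is deterministic: every FBC term has at most one →f-redex, i.e., if t →f u and t →f w then u = w. -/
import Mathlib


/-- Terms of the fireball calculus (FBC): variables, symbols, abstractions, applications. -/
inductive Term : Type
  | var : ℕ → Term
  | sym : ℕ → Term
  | lam : ℕ → Term → Term
  | app : Term → Term → Term

/-- Free variables of a term (symbols do not count as variables). -/
def Term.fv : Term → Finset ℕ
  | .var x => {x}
  | .sym _ => ∅
  | .lam x t => Term.fv t \ {x}
  | .app t u => Term.fv t ∪ Term.fv u

/-- A term is closed when it has no free variables. -/
def Term.Closed (t : Term) : Prop := Term.fv t = ∅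

/-- Capture-avoiding substitution `t{x:=u}` (under the convention that bound
variables are renamed apart, substitution proceeds structurally, stopping at
binders for `x`). -/
def Term.subst (x : ℕ) (u : Term) : Term → Term
  | .var y => if y = x then u else .var y
  | .sym a => .sym a
  | .lam y t => if y = x then .lam y t else .lam y (Term.subst x u t)
  | .app t s => .app (Term.subst x u t) (Term.subst x u s)

mutual
  /-- Inerts: a symbol applied to zero or more fireballs. -/
  inductive Inert : Term → Prop
    | sym : ∀ a : ℕ, Inert (Term.sym a)
    | app : ∀ t f : Term, Inert t → Fireball f → Inert (Term.app t f)
  /-- Fireballs: values (abstractions) or inerts. -/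
  inductive Fireball : Term → Prop
    | val : ∀ (x : ℕ) (t : Term), Fireball (Term.lam x t)
    | inert : ∀ t : Term, Inert t → Fireball t
end

/-- Contexts with one hole, of the shape E ::= ⟨·⟩ | t E | E t. -/
inductive Ctx : Type
  | hole : Ctx
  | appR : Term → Ctx → Ctx
  | appL : Ctx → Term → Ctx

/-- Plugging a term in a context. -/
def Ctx.plug : Ctx → Term → Term
  | .hole, t => t
  | .appR u E, t => Term.app u (Ctx.plug E t)
  | .appL E f, t => Term.app (Ctx.plug E t) f

/-- Evaluation contexts E ::= ⟨·⟩ | t E | E f, where f must be a fireball. -/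
inductive Ctx.Eval : Ctx → Prop
  | hole : Ctx.Eval Ctx.hole
  | appR : ∀ (t : Term) (E : Ctx), Ctx.Eval E → Ctx.Eval (Ctx.appR t E)
  | appL : ∀ (E : Ctx) (f : Term), Ctx.Eval E → Fireball f → Ctx.Eval (Ctx.appL E f)

/-- The fireball reduction →f : E⟨(λx.t) f⟩ →f E⟨t{x:=f}⟩ with f a fireball. -/
inductive Step : Term → Term → Prop
  | fire : ∀ (E : Ctx) (x : ℕ) (t f : Term), Ctx.Eval E → Fireball f →
      Step (Ctx.plug E (Term.app (Term.lam x t) f)) (Ctx.plug E (Term.subst x f t))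


lemma fb_app_inv {a b : Term} (h : Fireball (Term.app a b)) : Inert a ∧ Fireball b := by
  cases h with
  | inert _ hi => cases hi with | app _ _ ha hb => exact ⟨ha, hb⟩

lemma no_redex_in_fireball : ∀ (E : Ctx) (s : Term), Fireball s → ∀ x t f, Fireball f →
    s = Ctx.plug E (Term.app (Term.lam x t) f) → False := by
  intro E
  induction E with
  | hole =>
    intro s hs x t f hf heq
    subst heq
    obtain ⟨hi, _⟩ := fb_app_inv hs
    cases hi
  | appR u E ih =>
    intro s hs x t f hf heq
    subst heq
    obtain ⟨_, hb⟩ := fb_app_inv hs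
    exact ih _ hb x t f hf rfl
  | appL E g ih =>
    intro s hs x t f hf heq
    subst heq
    obtain ⟨ha, _⟩ := fb_app_inv hs
    exact ih _ (Fireball.inert _ ha) x t f hf rfl

lemma uniq_decomp : ∀ (E E' : Ctx), Ctx.Eval E → Ctx.Eval E' →
    ∀ x t f x' t' f', Fireball f → Fireball f' →
    Ctx.plug E (Term.app (Term.lam x t) f) = Ctx.plug E' (Term.app (Term.lam x' t') f') →
    Ctx.plug E (Term.subst x f t) = Ctx.plug E' (Term.subst x' f' t') := by
  intro E
  induction E with
  | hole =>
    intro E' _ hE' x t f x' t' f' hf hf' heq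
    cases E' with
    | hole =>
      simp only [Ctx.plug] at heq ⊢
      injection heq with h1 h2
      injection h1 with h3 h4
      subst h2 h3 h4; rfl
    | appR u E'' =>
      simp only [Ctx.plug] at heq
      injection heq with h1 h2
      cases hE' with
      | appR _ _ hE'' =>
        exact (no_redex_in_fireball E'' f hf x' t' f' hf' h2).elim
    | appL E'' g =>
      simp only [Ctx.plug] at heq
      injection heq with h1 h2
      -- h1 : lam x t = plug E'' redex, impossible since plug of app-redex is an app
      exfalso
      cases E'' <;> simp [Ctx.plug] at h1
  | appR u E ih =>
    intro E' hE hE' x t f x' t' f' hf hf' heq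
    cases hE with | appR _ _ hEe =>
    cases E' with
    | hole =>
      simp only [Ctx.plug] at heq
      injection heq with h1 h2
      exact (no_redex_in_fireball E f' hf' x t f hf h2.symm).elim
    | appR u' E'' =>
      cases hE' with | appR _ _ hE'' =>
      simp only [Ctx.plug] at heq ⊢
      injection heq with h1 h2
      rw [h1, ih E'' hEe hE'' x t f x' t' f' hf hf' h2]
    | appL E'' g =>
      cases hE' with | appL _ _ hE'' hg =>
      simp only [Ctx.plug] at heq
      injection heq with h1 h2
      exact (no_redex_in_fireball E g hg x t f hf h2.symm).elim
  | appL E g ih =>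
    intro E' hE hE' x t f x' t' f' hf hf' heq
    cases hE with | appL _ _ hEe hgfb =>
    cases E' with
    | hole =>
      simp only [Ctx.plug] at heq
      injection heq with h1 h2
      exfalso
      cases E <;> simp [Ctx.plug] at h1
    | appR u' E'' =>
      cases hE' with | appR _ _ hE'' =>
      simp only [Ctx.plug] at heq
      injection heq with h1 h2
      exact (no_redex_in_fireball E'' g hgfb x' t' f' hf' h2).elim
    | appL E'' g' =>
      cases hE' with | appL _ _ hE'' _ =>
      simp only [Ctx.plug] at heq ⊢
      injection heq with h1 h2
      rw [h2, ih E'' hEe hE'' x t f x' t' f' hf hf' h1]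

lemma step_inv {s w : Term} (h : Step s w) : ∃ E x a f, Ctx.Eval E ∧ Fireball f ∧
    s = Ctx.plug E (Term.app (Term.lam x a) f) ∧ w = Ctx.plug E (Term.subst x f a) := by
  cases h with | fire E x a f hE hf => exact ⟨E, x, a, f, hE, hf, rfl, rfl⟩

/-- the fireball reduction →f is deterministic. -/
theorem fireball_deterministic (t u w : Term) (h1 : Step t u) (h2 : Step t w) : u = w := by
  obtain ⟨E, x, a, f, hE, hf, rfl, rfl⟩ := step_inv h1
  obtain ⟨E', x', a', f', hE', hf', heq, rfl⟩ := step_inv h2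
  exact uniq_decomp E E' hE hE' x a f x' a' f' hf hf' heq
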